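/- Let (θ_k) be sub-multiplicative potentials with equilibrium states ν_k (i.e. P(θ_k) = h(ν_k) + Λ(θ_k,ν_k)). If ν_k → ν weakly* and θ_k(i)^{1/|i|} → θ(i)^{1/|i|} uniformly on Σ_* for a sub-multiplicative potential θ, then lim_{k→∞} (Λ(θ_k,ν_k) − Λ(θ,ν_k)) = 0 and ν is an equilibrium state for θ, i.e. P(θ) = h(ν) + Λ(θ,ν). -/

import Mathlib

open MeasureTheory Filter Topology

/-- The prefix of length `n` of an infinite word in the shift space `{1,…,N}^ℕ`. -/
def wordPrefix {N : ℕ} (x : ℕ → Fin N) (n : ℕ) : List (Fin N) :=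
  List.ofFn fun k : Fin n => x k

/-- The left shift on the full shift space. -/
def shiftMap (N : ℕ) : (ℕ → Fin N) → ℕ → Fin N := fun x n => x (n + 1)

/-- The measure of the cylinder set `[w]` as a real number. -/
noncomputable def cylMass {N : ℕ} (μ : Measure (ℕ → Fin N)) (w : List (Fin N)) : ℝ :=
  (μ {x | wordPrefix x w.length = w}).toReal

/-- The Kolmogorov–Sinai entropy `h(ν) = inf_n -(1/n) Σ_{|w|=n} ν[w] log ν[w]`. -/
noncomputable def entropyInv {N : ℕ} (ν : Measure (ℕ → Fin N)) : ℝ :=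
  ⨅ n : ℕ+, -((n : ℝ)⁻¹) * ∑ w : Fin (n : ℕ) → Fin N,
    cylMass ν (List.ofFn w) * Real.log (cylMass ν (List.ofFn w))

/-- `Λ(θ,ν) = inf_n (1/n) ∫ log θ(i|_n) dν(i)`, as an extended real number. -/
noncomputable def LyapE {N : ℕ} (θ : List (Fin N) → ℝ) (ν : Measure (ℕ → Fin N)) : EReal :=
  ⨅ n : ℕ+, (((n : ℝ)⁻¹ * ∫ x, Real.log (θ (wordPrefix x n)) ∂ν : ℝ) : EReal)

/-- The pressure `P(θ) = inf_n (1/n) log Σ_{|w|=n} θ(w)`, as an extended real number. -/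
noncomputable def pressureE {N : ℕ} (θ : List (Fin N) → ℝ) : EReal :=
  ⨅ n : ℕ+, (((n : ℝ)⁻¹ * Real.log (∑ w : Fin (n : ℕ) → Fin N, θ (List.ofFn w)) : ℝ) : EReal)

/-
The pressure, the entropy and the Lyapunov exponent are infima over `n` of finite-level quantities
`Pₙ(θ)`, `Hₙ(ν)` and `Lₙ(θ, ν)`. The uniform closeness of `θ_k` to `θ` shifts `Lₙ` and `Pₙ` by at
most `ε` for every `n` at once, which gives the first claim and `P(θ) ≤ P(θ_k) + ε`. Since `Hₘ` and
`Lₙ(θ, ·)` only depend on the masses of finitely many cylinders, which are clopen, they are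
weak* continuous, so `h + Λ(θ, ·)` is upper semicontinuous and
`P(θ) ≤ h(ν_k) + Λ(θ_k, ν_k) + ε ≤ h(ν_k) + Λ(θ, ν_k) + 2ε` passes to the limit.
The reverse inequality `Hₙ(ν) + Lₙ(θ, ν) ≤ Pₙ(θ)` is Gibbs' inequality.
-/

namespace EReal

theorem le_of_forall_pos_le_coe_add {x : EReal} {r : ℝ}
    (h : ∀ ε > 0, x ≤ ((r + ε : ℝ) : EReal)) : x ≤ r :=
  le_of_forall_lt_iff_le.1 fun z hz => by
    simpa using h (z - r) (by simpa using hz)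

theorem le_coe_ciInf {ι : Sort*} [Nonempty ι] {f : ι → ℝ} {x : EReal}
    (h : ∀ i, x ≤ f i) : x ≤ ((⨅ i, f i : ℝ) : EReal) := by
  induction x using EReal.rec with
  | bot => exact bot_le
  | coe r => exact EReal.coe_le_coe_iff.2 (le_ciInf fun i => EReal.coe_le_coe_iff.1 (h i))
  | top => exact absurd (h (Classical.arbitrary ι)) (by simp)

theorem le_coe_add_iInf {ι : Sort*} {a : ℝ} {g : ι → EReal} {x : EReal}
    (h : ∀ i, x ≤ a + g i) : x ≤ a + ⨅ i, g i := by
  rw [add_comm, ← sub_le_iff_le_add (by simp) (by simp)]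
  exact le_iInf fun i => (sub_le_iff_le_add (by simp) (by simp)).2 (add_comm (a : EReal) _ ▸ h i)

theorem iInf_coe_le_iInf_coe_add {ι : Sort*} {f g : ι → ℝ} {ε : ℝ} (h : ∀ i, f i ≤ g i + ε) :
    ⨅ i, (f i : EReal) ≤ (⨅ i, (g i : EReal)) + ε := by
  rw [add_comm]
  exact le_coe_add_iInf fun i => iInf_le_of_le i (by exact_mod_cast (h i).trans_eq (add_comm _ _))

end EReal

theorem Real.sum_mul_log_sub_sum_mul_log_le_log_sum {ι : Type*} [Fintype ι] [Nonempty ι]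
    {p t : ι → ℝ} (hp : ∀ i, 0 ≤ p i) (hp₁ : ∑ i, p i = 1) (ht : ∀ i, 0 < t i) :
    ∑ i, p i * Real.log (t i) - ∑ i, p i * Real.log (p i) ≤ Real.log (∑ i, t i) := by
  set S := ∑ i, t i
  have hS : 0 < S := Finset.sum_pos (fun i _ => ht i) Finset.univ_nonempty
  -- termwise `log x ≤ x - 1` at `x = t i / (p i * S)`; the right-hand sides sum to `0`
  have hterm : ∀ i,
      p i * Real.log (t i) - p i * Real.log (p i) - p i * Real.log S ≤ t i / S - p i := by
    intro i
    rcases (hp i).eq_or_lt with h0 | h0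
    · simpa [← h0] using div_nonneg (ht i).le hS.le
    · have hlog := Real.log_le_sub_one_of_pos (div_pos (ht i) (mul_pos h0 hS))
      rw [Real.log_div (ht i).ne' (mul_pos h0 hS).ne', Real.log_mul h0.ne' hS.ne'] at hlog
      have h2 : p i * (t i / (p i * S) - 1) = t i / S - p i := by field_simp
      nlinarith [mul_le_mul_of_nonneg_left hlog h0.le]
  have hsum := Finset.sum_le_sum fun i (_ : i ∈ Finset.univ) => hterm i
  simp only [Finset.sum_sub_distrib] at hsum
  rw [← Finset.sum_mul, hp₁, one_mul, ← Finset.sum_div, div_self hS.ne'] at hsum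
  linarith

section Cylinders

variable {N : ℕ}

def prefixVec (n : ℕ) (x : ℕ → Fin N) : Fin n → Fin N := fun k => x k

theorem measurable_prefixVec (n : ℕ) : Measurable (prefixVec (N := N) n) :=
  measurable_pi_lambda _ fun _ => measurable_pi_apply _

theorem continuous_prefixVec (n : ℕ) : Continuous (prefixVec (N := N) n) :=
  continuous_pi fun _ => continuous_apply _

theorem setOf_wordPrefix_ofFn {n : ℕ} (w : Fin n → Fin N) :
    {x : ℕ → Fin N | wordPrefix x (List.ofFn w).length = List.ofFn w} = prefixVec n ⁻¹' {w} := by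
  ext x
  simp only [Set.mem_ofPred_eq, Set.mem_preimage, Set.mem_singleton_iff, List.length_ofFn,
    wordPrefix, List.ofFn_inj]
  rfl

theorem cylMass_ofFn (ν : Measure (ℕ → Fin N)) {n : ℕ} (w : Fin n → Fin N) :
    cylMass ν (List.ofFn w) = (ν.map (prefixVec n)).real {w} := by
  rw [cylMass, setOf_wordPrefix_ofFn, measureReal_def,
    Measure.map_apply (measurable_prefixVec n) (measurableSet_singleton w)]

theorem nonempty_fin_of_isProbabilityMeasure (μ : Measure (ℕ → Fin N)) [IsProbabilityMeasure μ] :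
    Nonempty (Fin N) :=
  ⟨(nonempty_of_isProbabilityMeasure μ).some 0⟩

theorem cylMass_nonneg (ν : Measure (ℕ → Fin N)) (w : List (Fin N)) : 0 ≤ cylMass ν w :=
  ENNReal.toReal_nonneg

theorem cylMass_le_one (ν : Measure (ℕ → Fin N)) [IsProbabilityMeasure ν] (w : List (Fin N)) :
    cylMass ν w ≤ 1 :=
  measureReal_le_one

theorem integral_comp_prefixVec (ν : Measure (ℕ → Fin N)) [IsProbabilityMeasure ν] (n : ℕ)
    (g : (Fin n → Fin N) → ℝ) :
    ∫ x, g (prefixVec n x) ∂ν = ∑ w : Fin n → Fin N, cylMass ν (List.ofFn w) * g w := by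
  have hm := (measurable_prefixVec (N := N) n).aemeasurable (μ := ν)
  rw [← integral_map hm (measurable_of_countable g).aestronglyMeasurable,
    integral_fintype .of_finite]
  simp only [cylMass_ofFn, smul_eq_mul]

theorem sum_cylMass_ofFn (ν : Measure (ℕ → Fin N)) [IsProbabilityMeasure ν] (n : ℕ) :
    ∑ w : Fin n → Fin N, cylMass ν (List.ofFn w) = 1 := by
  simpa using (integral_comp_prefixVec ν n fun _ => 1).symm

theorem tendsto_cylMass_ofFn {νk : ℕ → ProbabilityMeasure (ℕ → Fin N)}
    {ν : ProbabilityMeasure (ℕ → Fin N)} (hlim : Tendsto νk atTop (𝓝 ν)) {n : ℕ}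
    (w : Fin n → Fin N) :
    Tendsto (fun k => cylMass (νk k : Measure (ℕ → Fin N)) (List.ofFn w)) atTop
      (𝓝 (cylMass (ν : Measure (ℕ → Fin N)) (List.ofFn w))) := by
  have hclopen : IsClopen (prefixVec (N := N) n ⁻¹' {w}) :=
    (isClopen_discrete {w}).preimage (continuous_prefixVec n)
  have := (NNReal.continuous_coe.tendsto _).comp
    (ProbabilityMeasure.tendsto_measure_of_isClopen_of_tendsto hlim hclopen)
  simp only [cylMass, setOf_wordPrefix_ofFn, ← measureReal_def,
    ProbabilityMeasure.measureReal_eq_coe_coeFn]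
  exact this

end Cylinders

section BlockQuantities

variable {N : ℕ}

noncomputable def blockEntropy (ν : Measure (ℕ → Fin N)) (n : ℕ+) : ℝ :=
  -((n : ℝ)⁻¹) * ∑ w : Fin (n : ℕ) → Fin N,
    cylMass ν (List.ofFn w) * Real.log (cylMass ν (List.ofFn w))

noncomputable def blockLyap (θ : List (Fin N) → ℝ) (ν : Measure (ℕ → Fin N)) (n : ℕ+) : ℝ :=
  (n : ℝ)⁻¹ * ∫ x, Real.log (θ (wordPrefix x n)) ∂ν

noncomputable def blockPressure (θ : List (Fin N) → ℝ) (n : ℕ+) : ℝ :=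
  (n : ℝ)⁻¹ * Real.log (∑ w : Fin (n : ℕ) → Fin N, θ (List.ofFn w))

theorem entropyInv_eq_iInf (ν : Measure (ℕ → Fin N)) : entropyInv ν = ⨅ n, blockEntropy ν n :=
  rfl

theorem blockLyap_eq_sum (θ : List (Fin N) → ℝ) (ν : Measure (ℕ → Fin N))
    [IsProbabilityMeasure ν] (n : ℕ+) :
    blockLyap θ ν n = (n : ℝ)⁻¹ * ∑ w : Fin (n : ℕ) → Fin N,
      cylMass ν (List.ofFn w) * Real.log (θ (List.ofFn w)) := by
  rw [blockLyap, ← integral_comp_prefixVec]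
  rfl

theorem blockEntropy_nonneg (ν : Measure (ℕ → Fin N)) [IsProbabilityMeasure ν] (n : ℕ+) :
    0 ≤ blockEntropy ν n := by
  rw [blockEntropy, neg_mul, neg_nonneg]
  exact mul_nonpos_of_nonneg_of_nonpos (by positivity) <| Finset.sum_nonpos fun w _ =>
    Real.mul_log_nonpos (cylMass_nonneg _ _) (cylMass_le_one _ _)

theorem entropyInv_le_blockEntropy (ν : Measure (ℕ → Fin N)) [IsProbabilityMeasure ν] (n : ℕ+) :
    entropyInv ν ≤ blockEntropy ν n :=
  ciInf_le ⟨0, Set.forall_mem_range.2 (blockEntropy_nonneg ν)⟩ n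

theorem lyapE_le_blockLyap (θ : List (Fin N) → ℝ) (ν : Measure (ℕ → Fin N)) (n : ℕ+) :
    LyapE θ ν ≤ blockLyap θ ν n :=
  iInf_le (fun n => (blockLyap θ ν n : EReal)) n

theorem blockEntropy_add_blockLyap_le_blockPressure {θ : List (Fin N) → ℝ} (hθ : ∀ w, 0 < θ w)
    (ν : Measure (ℕ → Fin N)) [IsProbabilityMeasure ν] (n : ℕ+) :
    blockEntropy ν n + blockLyap θ ν n ≤ blockPressure θ n := by
  have := nonempty_fin_of_isProbabilityMeasure ν
  have hgibbs := Real.sum_mul_log_sub_sum_mul_log_le_log_sum (fun _ => cylMass_nonneg _ _)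
    (sum_cylMass_ofFn ν n) fun w : Fin n → Fin N => hθ (List.ofFn w)
  rw [blockLyap_eq_sum, blockEntropy, blockPressure, neg_mul, neg_add_eq_sub, ← mul_sub]
  exact mul_le_mul_of_nonneg_left hgibbs (by positivity)

theorem le_entropyInv_add_lyapE {θ : List (Fin N) → ℝ} (μ : Measure (ℕ → Fin N))
    [IsProbabilityMeasure μ] {x : EReal}
    (h : ∀ m n, x ≤ ((blockEntropy μ m + blockLyap θ μ n : ℝ) : EReal)) :
    x ≤ entropyInv μ + LyapE θ μ := by
  refine EReal.le_coe_add_iInf fun n => ?_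
  rw [← EReal.coe_add, entropyInv_eq_iInf,
    ciInf_add ⟨0, Set.forall_mem_range.2 (blockEntropy_nonneg μ)⟩]
  exact EReal.le_coe_ciInf fun m => h m n

theorem entropyInv_add_lyapE_le_pressureE {θ : List (Fin N) → ℝ} (hθ : ∀ w, 0 < θ w)
    (μ : Measure (ℕ → Fin N)) [IsProbabilityMeasure μ] :
    entropyInv μ + LyapE θ μ ≤ pressureE θ :=
  le_iInf fun n => calc
    entropyInv μ + LyapE θ μ ≤ ((blockEntropy μ n + blockLyap θ μ n : ℝ) : EReal) := by
      rw [EReal.coe_add]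
      gcongr
      · exact entropyInv_le_blockEntropy μ n
      · exact lyapE_le_blockLyap θ μ n
    _ ≤ blockPressure θ n :=
      EReal.coe_le_coe_iff.2 (blockEntropy_add_blockLyap_le_blockPressure hθ μ n)

end BlockQuantities

section Comparison

variable {N : ℕ} {θ₁ θ₂ : List (Fin N) → ℝ} {ε : ℝ}

theorem blockLyap_le_add (hb : ∀ w, Real.log (θ₁ w) - Real.log (θ₂ w) ≤ ε * w.length)
    (ν : Measure (ℕ → Fin N)) [IsProbabilityMeasure ν] (n : ℕ+) :
    blockLyap θ₁ ν n ≤ blockLyap θ₂ ν n + ε := by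
  have hn : (0 : ℝ) < n := by positivity
  have hsum : ∑ w : Fin n → Fin N, cylMass ν (List.ofFn w) * Real.log (θ₁ (List.ofFn w)) ≤
      ∑ w : Fin n → Fin N, cylMass ν (List.ofFn w) * Real.log (θ₂ (List.ofFn w)) + ε * n :=
    calc _ ≤ ∑ w : Fin n → Fin N,
          cylMass ν (List.ofFn w) * (Real.log (θ₂ (List.ofFn w)) + ε * n) := by
          gcongr with w
          · exact cylMass_nonneg _ _
          · linarith [List.length_ofFn (f := w) ▸ hb (List.ofFn w)]
      _ = _ := by
          simp only [mul_add, Finset.sum_add_distrib, ← Finset.sum_mul, sum_cylMass_ofFn, one_mul]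
  rw [blockLyap_eq_sum, blockLyap_eq_sum]
  calc _ ≤ (n : ℝ)⁻¹ * (∑ w : Fin n → Fin N,
        cylMass ν (List.ofFn w) * Real.log (θ₂ (List.ofFn w)) + ε * n) := by gcongr
    _ = _ := by field_simp

theorem blockPressure_le_add [Nonempty (Fin N)] (h₁ : ∀ w, 0 < θ₁ w) (h₂ : ∀ w, 0 < θ₂ w)
    (hb : ∀ w, Real.log (θ₁ w) - Real.log (θ₂ w) ≤ ε * w.length) (n : ℕ+) :
    blockPressure θ₁ n ≤ blockPressure θ₂ n + ε := by
  have hn : (0 : ℝ) < n := by positivity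
  have hS₂ : 0 < ∑ w : Fin n → Fin N, θ₂ (List.ofFn w) :=
    Finset.sum_pos (fun w _ => h₂ _) Finset.univ_nonempty
  have hS₁ : 0 < ∑ w : Fin n → Fin N, θ₁ (List.ofFn w) :=
    Finset.sum_pos (fun w _ => h₁ _) Finset.univ_nonempty
  have hsum : ∑ w : Fin n → Fin N, θ₁ (List.ofFn w) ≤
      (∑ w : Fin n → Fin N, θ₂ (List.ofFn w)) * Real.exp (ε * n) := by
    rw [Finset.sum_mul]
    refine Finset.sum_le_sum fun w _ => ?_
    rw [← Real.log_le_log_iff (h₁ _) (mul_pos (h₂ _) (Real.exp_pos _)),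
      Real.log_mul (h₂ _).ne' (Real.exp_pos _).ne', Real.log_exp, ← sub_le_iff_le_add']
    simpa using hb (List.ofFn w)
  have hlog := Real.log_le_log hS₁ hsum
  rw [Real.log_mul hS₂.ne' (Real.exp_pos _).ne', Real.log_exp] at hlog
  rw [blockPressure, blockPressure]
  calc _ ≤ (n : ℝ)⁻¹ * (Real.log (∑ w : Fin n → Fin N, θ₂ (List.ofFn w)) + ε * n) := by gcongr
    _ = _ := by field_simp

theorem lyapE_le_add (hb : ∀ w, Real.log (θ₁ w) - Real.log (θ₂ w) ≤ ε * w.length)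
    (ν : Measure (ℕ → Fin N)) [IsProbabilityMeasure ν] :
    LyapE θ₁ ν ≤ LyapE θ₂ ν + ε :=
  EReal.iInf_coe_le_iInf_coe_add (blockLyap_le_add hb ν)

theorem pressureE_le_add [Nonempty (Fin N)] (h₁ : ∀ w, 0 < θ₁ w) (h₂ : ∀ w, 0 < θ₂ w)
    (hb : ∀ w, Real.log (θ₁ w) - Real.log (θ₂ w) ≤ ε * w.length) :
    pressureE θ₁ ≤ pressureE θ₂ + ε :=
  EReal.iInf_coe_le_iInf_coe_add (blockPressure_le_add h₁ h₂ hb)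

end Comparison

section WeakLimit

variable {N : ℕ} {νk : ℕ → ProbabilityMeasure (ℕ → Fin N)} {ν : ProbabilityMeasure (ℕ → Fin N)}

theorem tendsto_blockEntropy (hlim : Tendsto νk atTop (𝓝 ν)) (n : ℕ+) :
    Tendsto (fun k => blockEntropy (νk k : Measure (ℕ → Fin N)) n) atTop
      (𝓝 (blockEntropy (ν : Measure (ℕ → Fin N)) n)) :=
  .const_mul _ <| tendsto_finsetSum _ fun w _ =>
    (Real.continuous_mul_log.tendsto _).comp (tendsto_cylMass_ofFn hlim w)

theorem tendsto_blockLyap (hlim : Tendsto νk atTop (𝓝 ν)) (θ : List (Fin N) → ℝ) (n : ℕ+) :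
    Tendsto (fun k => blockLyap θ (νk k : Measure (ℕ → Fin N)) n) atTop
      (𝓝 (blockLyap θ (ν : Measure (ℕ → Fin N)) n)) := by
  simp only [blockLyap_eq_sum]
  exact .const_mul _ <| tendsto_finsetSum _ fun w _ => (tendsto_cylMass_ofFn hlim w).mul_const _

theorem le_entropyInv_add_lyapE_of_tendsto (hlim : Tendsto νk atTop (𝓝 ν))
    (θ : List (Fin N) → ℝ) {x : EReal}
    (h : ∀ ε : ℝ, 0 < ε → ∀ᶠ k in atTop, x ≤ entropyInv (νk k : Measure (ℕ → Fin N)) +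
      LyapE θ (νk k : Measure (ℕ → Fin N)) + ε) :
    x ≤ entropyInv (ν : Measure (ℕ → Fin N)) + LyapE θ (ν : Measure (ℕ → Fin N)) := by
  refine le_entropyInv_add_lyapE _ fun m n => EReal.le_of_forall_pos_le_coe_add fun ε hε => ?_
  refine ge_of_tendsto ((continuous_coe_real_ereal.tendsto _).comp
    (((tendsto_blockEntropy hlim m).add (tendsto_blockLyap hlim θ n)).add_const ε)) ?_
  filter_upwards [h ε hε] with k hk
  calc x ≤ entropyInv (νk k : Measure (ℕ → Fin N)) + LyapE θ (νk k : Measure (ℕ → Fin N)) + ε := hk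
    _ ≤ blockEntropy (νk k : Measure (ℕ → Fin N)) m +
        blockLyap θ (νk k : Measure (ℕ → Fin N)) n + (ε : EReal) := by
      gcongr
      · exact entropyInv_le_blockEntropy _ m
      · exact lyapE_le_blockLyap θ _ n
    _ = _ := by simp only [Function.comp_apply, EReal.coe_add]

end WeakLimit

theorem stmt_14_general {N : ℕ}
    (θk : ℕ → List (Fin N) → ℝ) (θ : List (Fin N) → ℝ)
    (hkpos : ∀ k w, 0 < θk k w) (hpos : ∀ w, 0 < θ w)
    (νk : ℕ → ProbabilityMeasure (ℕ → Fin N)) (ν : ProbabilityMeasure (ℕ → Fin N))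
    (heq : ∀ k, pressureE (θk k) =
      (entropyInv (νk k : Measure (ℕ → Fin N)) : EReal) +
        LyapE (θk k) (νk k : Measure (ℕ → Fin N)))
    (hlim : Tendsto νk atTop (𝓝 ν))
    (hunif : ∀ ε > (0 : ℝ), ∃ k0, ∀ k ≥ k0, ∀ w : List (Fin N),
      |Real.log (θk k w) - Real.log (θ w)| ≤ ε * w.length) :
    (∀ ε > (0 : ℝ), ∀ᶠ k in atTop,
      LyapE θ (νk k : Measure (ℕ → Fin N)) - ((ε : ℝ) : EReal) ≤
          LyapE (θk k) (νk k : Measure (ℕ → Fin N)) ∧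
        LyapE (θk k) (νk k : Measure (ℕ → Fin N)) ≤
          LyapE θ (νk k : Measure (ℕ → Fin N)) + ((ε : ℝ) : EReal)) ∧
    pressureE θ =
      (entropyInv (ν : Measure (ℕ → Fin N)) : EReal) + LyapE θ (ν : Measure (ℕ → Fin N)) := by
  have := nonempty_fin_of_isProbabilityMeasure (ν : Measure (ℕ → Fin N))
  have hclose : ∀ ε > (0 : ℝ), ∀ᶠ k in atTop,
      (∀ w, Real.log (θk k w) - Real.log (θ w) ≤ ε * w.length) ∧
        ∀ w, Real.log (θ w) - Real.log (θk k w) ≤ ε * w.length := fun ε hε => by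
    obtain ⟨k0, hk0⟩ := hunif ε hε
    filter_upwards [eventually_ge_atTop k0] with k hk
    exact ⟨fun w => (le_abs_self _).trans (hk0 k hk w),
      fun w => (le_abs_self _).trans ((abs_sub_comm _ _).trans_le (hk0 k hk w))⟩
  refine ⟨fun ε hε => (hclose ε hε).mono fun k ⟨hle, hge⟩ =>
    ⟨(EReal.sub_le_iff_le_add (by simp) (by simp)).2 (lyapE_le_add hge _), lyapE_le_add hle _⟩,
    le_antisymm (le_entropyInv_add_lyapE_of_tendsto hlim θ fun ε hε => ?_)
      (entropyInv_add_lyapE_le_pressureE hpos _)⟩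
  filter_upwards [hclose (ε / 2) (half_pos hε)] with k ⟨hle, hge⟩
  calc pressureE θ ≤ pressureE (θk k) + (ε / 2 : ℝ) := pressureE_le_add hpos (hkpos k) hge
    _ ≤ entropyInv (νk k : Measure (ℕ → Fin N)) +
        (LyapE θ (νk k : Measure (ℕ → Fin N)) + (ε / 2 : ℝ)) + (ε / 2 : ℝ) := by
      rw [heq k]
      gcongr
      exact lyapE_le_add hle _
    _ = _ := by rw [add_assoc, add_assoc, ← EReal.coe_add, add_halves, ← add_assoc]

/-- Let `θ_k` be sub-multiplicative positive potentials with (invariant)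
equilibrium states `ν_k`, i.e. `P(θ_k) = h(ν_k) + Λ(θ_k,ν_k)`. If `ν_k → ν` weakly* and
`θ_k(w)^{1/|w|} → θ(w)^{1/|w|}` uniformly on finite words (in the sense that for every
`ε > 0` eventually `|log θ_k(w) − log θ(w)| ≤ ε|w|` for all `w`) for a sub-multiplicative
positive potential `θ`, then `Λ(θ_k,ν_k) − Λ(θ,ν_k) → 0` and `ν` is an equilibrium state for
`θ`: `P(θ) = h(ν) + Λ(θ,ν)`. -/
theorem stmt_14 {N : ℕ}
    (θk : ℕ → List (Fin N) → ℝ) (θ : List (Fin N) → ℝ)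
    (hkpos : ∀ k w, 0 < θk k w) (hpos : ∀ w, 0 < θ w)
    (hksub : ∀ k (u v : List (Fin N)), θk k (u ++ v) ≤ θk k u * θk k v)
    (hsub : ∀ u v : List (Fin N), θ (u ++ v) ≤ θ u * θ v)
    (νk : ℕ → ProbabilityMeasure (ℕ → Fin N)) (ν : ProbabilityMeasure (ℕ → Fin N))
    (hinvk : ∀ k, MeasurePreserving (shiftMap N)
      (νk k : Measure (ℕ → Fin N)) (νk k : Measure (ℕ → Fin N)))
    (heq : ∀ k, pressureE (θk k) =
      (entropyInv (νk k : Measure (ℕ → Fin N)) : EReal) +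
        LyapE (θk k) (νk k : Measure (ℕ → Fin N)))
    (hlim : Tendsto νk atTop (𝓝 ν))
    (hunif : ∀ ε > (0 : ℝ), ∃ k0, ∀ k ≥ k0, ∀ w : List (Fin N),
      |Real.log (θk k w) - Real.log (θ w)| ≤ ε * w.length) :
    (∀ ε > (0 : ℝ), ∀ᶠ k in atTop,
      LyapE θ (νk k : Measure (ℕ → Fin N)) - ((ε : ℝ) : EReal) ≤
          LyapE (θk k) (νk k : Measure (ℕ → Fin N)) ∧
        LyapE (θk k) (νk k : Measure (ℕ → Fin N)) ≤
          LyapE θ (νk k : Measure (ℕ → Fin N)) + ((ε : ℝ) : EReal)) ∧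
    pressureE θ =
      (entropyInv (ν : Measure (ℕ → Fin N)) : EReal) + LyapE θ (ν : Measure (ℕ → Fin N)) :=
  stmt_14_general θk θ hkpos hpos νk ν heq hlim hunif
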